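/- Let M be a MUL-tree on X and let u, v be vertices of M such that u is an ancestor of v. Then |p_M(u)| ≤ |p_M(v)|, i.e., the ∼-equivalence class of u has at most as many elements as the ∼-equivalence class of v. -/

import Mathlib

/- ------------------------------------------------------------------
Common combinatorial framework for phylogenetic networks, MUL-trees,
un-fold and fold-up operations, following Huber--Moulton--Scornavacca--
Steel and the paper "Three applications of un-fold/fold-up operations
for stable phylogenetic networks".

A `Net` is a rooted directed multigraph: `arcs u v` records the number
of parallel arcs from `u` to `v`.  Directed walks are recorded as lists
of *arc tokens* `(u, v, i)` (the `i`-th parallel arc from `u` to `v`),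
so that parallel arcs give rise to different directed paths.
------------------------------------------------------------------- -/

open Classical

universe u v w

namespace Phylo

/-- A rooted directed multigraph on the vertex type `V`:  `arcs u v` is the
number of parallel arcs from `u` to `v`, `verts` is the vertex set and
`root` the root. -/
structure Net (V : Type u) where
  verts : Set V
  arcs : V → V → ℕ
  root : V

/-- An arc token: `(u, v, i)` stands for the `i`-th parallel arc from `u` to `v`. -/
abbrev Arc (V : Type u) := V × V × ℕ

namespace Net

variable {V : Type u}

/-- The arc token `a` is a genuine arc of `N`. -/
def okArc (N : Net V) (a : Arc V) : Prop :=
  a.1 ∈ N.verts ∧ a.2.1 ∈ N.verts ∧ a.2.2 < N.arcs a.1 a.2.1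

/-- `l` is a directed walk (possibly trivial) starting at the vertex `u`,
recorded as the list of its arc tokens. -/
def WalkFrom (N : Net V) (u : V) (l : List (Arc V)) : Prop :=
  u ∈ N.verts ∧ (∀ a ∈ l, N.okArc a) ∧
    List.Chain' (fun a b : Arc V => a.2.1 = b.1) l ∧
    ∀ a ∈ l.head?, (a : Arc V).1 = u

/-- The end vertex of the walk `l` starting at `u`. -/
def endOf (u : V) (l : List (Arc V)) : V := (l.getLastD (u, u, 0)).2.1

/-- The list of vertices visited by a walk `l` starting at `u`. -/
def walkVerts (u : V) (l : List (Arc V)) : List V := u :: l.map (fun a => a.2.1)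

/-- The inner (non-endpoint) vertices of a walk `l` starting at `u`. -/
def innerVerts (u : V) (l : List (Arc V)) : List V := ((walkVerts u l).dropLast).drop 1

/-- `w` is *below* `u` (there is a directed path from `u` to `w`; every
vertex is below itself).  Equivalently, `u` is an *ancestor* of `w`. -/
def Reaches (N : Net V) (u w : V) : Prop := ∃ l, N.WalkFrom u l ∧ endOf u l = w

/-- The indegree of a vertex (counting parallel arcs). -/
noncomputable def inDeg (N : Net V) (v : V) : ℕ := ∑ᶠ u, N.arcs u v

/-- The outdegree of a vertex (counting parallel arcs). -/
noncomputable def outDeg (N : Net V) (v : V) : ℕ := ∑ᶠ u, N.arcs v u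

/-- A leaf is a vertex of outdegree zero. -/
def IsLeaf (N : Net V) (v : V) : Prop := v ∈ N.verts ∧ N.outDeg v = 0

/-- An interior vertex is a non-leaf vertex. -/
def IsInterior (N : Net V) (v : V) : Prop := v ∈ N.verts ∧ N.outDeg v ≠ 0

/-- A tree vertex is a vertex of indegree at most one. -/
def IsTreeVert (N : Net V) (v : V) : Prop := v ∈ N.verts ∧ N.inDeg v ≤ 1

/-- A hybrid vertex is a vertex of indegree at least two. -/
def IsHybrid (N : Net V) (v : V) : Prop := v ∈ N.verts ∧ 2 ≤ N.inDeg v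

/-- The one-step arc relation. -/
def ArcRel (N : Net V) (u v : V) : Prop := 0 < N.arcs u v

/-- `N` contains no directed cycle. -/
def Acyclic (N : Net V) : Prop := ∀ v, ¬ Relation.TransGen N.ArcRel v v

/-- A rooted connected pseudoDAG: a finite rooted directed (multi)graph with
no directed cycles in which every vertex is reachable from the root. -/
structure IsPseudoDAG (N : Net V) : Prop where
  finite : N.verts.Finite
  rootMem : N.root ∈ N.verts
  arcMem : ∀ u v, N.arcs u v ≠ 0 → u ∈ N.verts ∧ v ∈ N.verts
  acyclic : N.Acyclic
  connected : ∀ v ∈ N.verts, N.Reaches N.root v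

/-- An `X`-network: a rooted connected pseudoDAG whose leaf set is `X`, where
the root has indegree zero, every non-leaf tree vertex has outdegree two,
every hybrid vertex has outdegree one, and every leaf has total degree one. -/
structure IsXNetwork (N : Net V) (X : Set V) extends IsPseudoDAG N : Prop where
  rootInDeg : N.inDeg N.root = 0
  leafSet : ∀ v, N.IsLeaf v ↔ v ∈ X
  treeOutDeg : ∀ v ∈ N.verts, N.inDeg v ≤ 1 → N.outDeg v ≠ 0 → N.outDeg v = 2
  hybridOutDeg : ∀ v ∈ N.verts, 2 ≤ N.inDeg v → N.outDeg v = 1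
  leafInDeg : ∀ v ∈ X, N.inDeg v = 1

/-- No parallel arcs. -/
def NoParallel (N : Net V) : Prop := ∀ u v, N.arcs u v ≤ 1

/-- A phylogenetic network on `X`: an `X`-network without parallel arcs. -/
structure IsPhyloNetwork (N : Net V) (X : Set V) extends IsXNetwork N X : Prop where
  noParallel : N.NoParallel

/-- A phylogenetic tree on `X`: a phylogenetic network with no hybrid vertices. -/
structure IsPhyloTree (N : Net V) (X : Set V) extends IsPhyloNetwork N X : Prop where
  noHybrid : ∀ v, ¬ N.IsHybrid v

/-- A vertex with indegree one and outdegree one (to be suppressed). -/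
def Suppressible (N : Net V) (v : V) : Prop :=
  v ∈ N.verts ∧ N.inDeg v = 1 ∧ N.outDeg v = 1

/-- The graph obtained from `N` by suppressing all vertices of indegree one and
outdegree one: kept vertices are the non-suppressible ones, and the number of
arcs from `u` to `w` is the number of directed paths from `u` to `w` in `N`
all of whose inner vertices are suppressible. -/
noncomputable def suppr (N : Net V) : Net V where
  verts := {v ∈ N.verts | ¬ N.Suppressible v}
  arcs := fun u w =>
    if u ∈ N.verts ∧ ¬ N.Suppressible u ∧ w ∈ N.verts ∧ ¬ N.Suppressible w then
      Set.ncard {l : List (Arc V) | N.WalkFrom u l ∧ l ≠ [] ∧ endOf u l = w ∧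
        ∀ x ∈ innerVerts u l, N.Suppressible x}
    else 0
  root := N.root

/-- `g` realizes an isomorphism of rooted multigraphs from `N` to `N'`. -/
def NetIsoVia {W : Type w} (N : Net V) (N' : Net W) (g : V → W) : Prop :=
  Set.BijOn g N.verts N'.verts ∧
    (∀ u ∈ N.verts, ∀ v ∈ N.verts, N'.arcs (g u) (g v) = N.arcs u v) ∧
    g N.root = N'.root

/-- `w` is a vertex-stable ancestor of the leaf `x`: `w` is an interior vertex
lying on every directed path from the root to `x`. -/
def IsVSAncestor (N : Net V) (w x : V) : Prop :=
  N.IsInterior w ∧ N.IsLeaf x ∧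
    ∀ l, N.WalkFrom N.root l → endOf N.root l = x → w ∈ walkVerts N.root l

/-- `N` is tree-child: every interior vertex has a child that is a tree vertex. -/
def TreeChild (N : Net V) : Prop :=
  ∀ v, N.IsInterior v → ∃ u, 0 < N.arcs v u ∧ N.IsTreeVert u

/-- `N` is compressed: no arc has both its tail and its head hybrid. -/
def Compressed (N : Net V) : Prop :=
  ∀ u v, 0 < N.arcs u v → ¬(N.IsHybrid u ∧ N.IsHybrid v)

/-- `N` is reticulation-visible: every hybrid vertex is a vertex-stable
ancestor of some leaf. -/
def RetVisible (N : Net V) (X : Set V) : Prop :=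
  ∀ h, N.IsHybrid h → ∃ x ∈ X, N.IsVSAncestor h x

/-- The set of arc tokens used by a walk. -/
def arcsOf (l : List (Arc V)) : Set (Arc V) := {a | a ∈ l}

/-- The union of the directed paths `p₁` and `p₂` contains a subgraph that is
a reticulation cycle of `N`, i.e. the union of two arc-disjoint non-trivial
directed paths of `N` with the same start vertex and the same end vertex. -/
def ContainsRetCycle (N : Net V) (p₁ p₂ : List (Arc V)) : Prop :=
  ∃ (q₁ q₂ : List (Arc V)) (s e : V),
    N.WalkFrom s q₁ ∧ N.WalkFrom s q₂ ∧ q₁ ≠ [] ∧ q₂ ≠ [] ∧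
    endOf s q₁ = e ∧ endOf s q₂ = e ∧
    Disjoint (arcsOf q₁) (arcsOf q₂) ∧
    arcsOf q₁ ∪ arcsOf q₂ ⊆ arcsOf p₁ ∪ arcsOf p₂

/-- The set of vertices having a descendant in `Y`. -/
def keepSet (N : Net V) (Y : Set V) : Set V := {v ∈ N.verts | ∃ y ∈ Y, N.Reaches v y}

/-- The result of the leaf-removing operations applied to all leaves outside
`Y`: restrict to the vertices having a descendant in `Y` and suppress all
resulting vertices of indegree one and outdegree one. -/
noncomputable def restrictNet (N : Net V) (Y : Set V) : Net V :=
  Net.suppr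
    { verts := N.keepSet Y
      arcs := fun u w => if u ∈ N.keepSet Y ∧ w ∈ N.keepSet Y then N.arcs u w else 0
      root := N.root }

end Net

/-- A labelled rooted directed multigraph: the data of a MUL-tree on the
label set: `lab x` is the set of leaves labelled `x`. -/
structure LNet (V : Type u) (L : Type v) extends Net V where
  lab : L → Set V

namespace LNet

variable {V : Type u} {L : Type v}

/-- `M` is a MUL-tree on `X`: a rooted tree whose root has indegree `0`, with
no vertex of indegree one and outdegree one, in which every leaf carries
exactly one label from `X` and every label of `X` occurs. -/
structure IsMulTree (M : LNet V L) (X : Set L) : Prop where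
  pseudo : M.toNet.IsPseudoDAG
  rootInDeg : M.toNet.inDeg M.root = 0
  inDegOne : ∀ v ∈ M.verts, v ≠ M.root → M.toNet.inDeg v = 1
  noSupp : ∀ v, ¬ M.toNet.Suppressible v
  labLeaf : ∀ x ∈ X, ∀ l ∈ M.lab x, M.toNet.IsLeaf l
  labNonempty : ∀ x ∈ X, (M.lab x).Nonempty
  labCover : ∀ l, M.toNet.IsLeaf l → ∃! x, x ∈ X ∧ l ∈ M.lab x
  labOff : ∀ x, x ∉ X → M.lab x = ∅

/-- The set of vertices below `v`. -/
def belowSet (M : LNet V L) (v : V) : Set V := {w | M.toNet.Reaches v w}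

/-- The subMUL-tree `M_v` of `M` rooted at the vertex `v` (delete the incoming
arc of `v` and restrict the labelling). -/
noncomputable def subAt (M : LNet V L) (v : V) : LNet V L where
  verts := M.belowSet v
  arcs := fun u w => if u ∈ M.belowSet v ∧ w ∈ M.belowSet v then M.arcs u w else 0
  root := v
  lab := fun x => M.lab x ∩ M.belowSet v

/-- `η` realizes an isomorphism of MUL-trees (same label type). -/
def MulIsoVia {V' : Type w} (M : LNet V L) (M' : LNet V' L) (η : V → V') : Prop :=
  Set.BijOn η M.verts M'.verts ∧
    (∀ u ∈ M.verts, ∀ w ∈ M.verts, M'.arcs (η u) (η w) = M.arcs u w) ∧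
    η M.root = M'.root ∧
    ∀ x : L, η '' (M.lab x ∩ M.verts) = M'.lab x ∩ M'.verts

/-- Two labelled trees (on the same label type) are isomorphic. -/
def MulIso {V' : Type w} (M : LNet V L) (M' : LNet V' L) : Prop := ∃ η, MulIsoVia M M' η

/-- `η` realizes an isomorphism of MUL-trees on `X` modulo the label
translation `e`. -/
def MulIsoRelVia {V' : Type w} {L' : Type*} (M : LNet V L) (X : Set L)
    (M' : LNet V' L') (e : L → L') (η : V → V') : Prop :=
  Set.BijOn η M.verts M'.verts ∧
    (∀ u ∈ M.verts, ∀ w ∈ M.verts, M'.arcs (η u) (η w) = M.arcs u w) ∧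
    η M.root = M'.root ∧
    ∀ x ∈ X, η '' (M.lab x ∩ M.verts) = M'.lab (e x) ∩ M'.verts

/-- The equivalence relation `∼`: `u ∼ w` iff `u = w` or the subMUL-trees
`M_u` and `M_w` are isomorphic. -/
def Sim (M : LNet V L) (u w : V) : Prop := u = w ∨ MulIso (M.subAt u) (M.subAt w)

/-- The `∼`-equivalence class of `w`; the map `eqClass M : V(M) → V(M)/∼`
plays the role of the projection `p_M` onto the quotient. -/
def eqClass (M : LNet V L) (w : V) : Set V := {u ∈ M.verts | M.Sim u w}

/-- The quotient `V(M)/∼`, realized as the set of `∼`-equivalence classes. -/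
def classSet (M : LNet V L) : Set (Set V) := M.eqClass '' M.verts

/-- `c` is a `∼`-equivalence class of `M`. -/
def IsClassOf (M : LNet V L) (c : Set V) : Prop := ∃ w ∈ M.verts, c = M.eqClass w

/-- The class `c` gets a hybrid vertex above it in the fold-up of `M`:
some (equivalently, any) member of `c` has its parent in a strictly smaller
`∼`-class. -/
def ClassHyb (M : LNet V L) (c : Set V) : Prop :=
  ∃ w ∈ M.verts, c = M.eqClass w ∧ ∃ u, 0 < M.arcs u w ∧ (M.eqClass u).ncard < c.ncard

/-- `d` is the class of a parent of a member of `c`. -/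
def IsParentClassOf (M : LNet V L) (d c : Set V) : Prop :=
  ∃ u w, 0 < M.arcs u w ∧ d = M.eqClass u ∧ c = M.eqClass w

/-- The number of children inside `c` of a member of `d`. -/
noncomputable def childMult (M : LNet V L) (d c : Set V) : ℕ :=
  sSup {n : ℕ | ∃ u ∈ d, n = ∑ᶠ w ∈ c, M.arcs u w}

/-- The fold-up `F(M)` of the MUL-tree `M`: the `X`-network obtained by
repeatedly identifying all maximal inextendible subMUL-trees, subdividing
the incoming arcs of their roots and identifying the subdivision vertices.
Concretely, its tree vertices are the `∼`-classes of `M`, there is a hybrid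
vertex above each class whose members have parents in a strictly smaller
class, and arcs are induced by the arcs of `M`. -/
noncomputable def foldUp (M : LNet V L) : Net (Set V ⊕ Set V) where
  verts := (Sum.inl '' {c | M.IsClassOf c}) ∪
    (Sum.inr '' {c | M.IsClassOf c ∧ M.ClassHyb c})
  arcs := fun a b =>
    match a, b with
    | Sum.inl d, Sum.inl c =>
        if M.IsClassOf d ∧ M.IsClassOf c ∧ ¬ M.ClassHyb c ∧ M.IsParentClassOf d c
        then 1 else 0
    | Sum.inl d, Sum.inr c =>
        if M.IsClassOf d ∧ M.IsClassOf c ∧ M.ClassHyb c ∧ M.IsParentClassOf d c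
        then M.childMult d c else 0
    | Sum.inr c, Sum.inl c' =>
        if c' = c ∧ M.IsClassOf c ∧ M.ClassHyb c then 1 else 0
    | Sum.inr _, Sum.inr _ => 0
  root := Sum.inl (M.eqClass M.root)

/-- The `∼`-class of the leaves labelled `x`. -/
def labClass (M : LNet V L) (x : L) : Set V := {w ∈ M.verts | ∃ l ∈ M.lab x, M.Sim w l}

/-- The leaf set of the fold-up of `M`, identified with `X`. -/
def foldX (M : LNet V L) (X : Set L) : Set (Set V ⊕ Set V) :=
  (fun x => Sum.inl (M.labClass x)) '' X

/-- A MUL-tree is sound if its fold-up is a phylogenetic network. -/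
def IsSound (M : LNet V L) (X : Set L) : Prop :=
  M.IsMulTree X ∧ Net.IsPhyloNetwork M.foldUp (M.foldX X)

/-- An `X`-set of `M`: a set of leaves containing exactly one leaf labelled
`x` for every `x ∈ X`. -/
def IsXSet (M : LNet V L) (X : Set L) (C : Set V) : Prop :=
  (∀ l ∈ C, M.toNet.IsLeaf l) ∧ ∀ x ∈ X, ∃! l, l ∈ C ∧ l ∈ M.lab x

/-- `r` is the last common ancestor of the elements of `C`. -/
def IsLca (M : LNet V L) (r : V) (C : Set V) : Prop :=
  r ∈ M.verts ∧ (∀ c ∈ C, M.toNet.Reaches r c) ∧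
    ∀ r' ∈ M.verts, (∀ c ∈ C, M.toNet.Reaches r' c) → M.toNet.Reaches r' r

/-- The last common ancestor `r_C` of the elements of `C`. -/
noncomputable def lcaOf [Nonempty V] (M : LNet V L) (C : Set V) : V :=
  Classical.epsilon fun r => M.IsLca r C

/-- The vertex set of `M_C⁺`: all vertices on a directed path from
`lca(C)` to a leaf in `C`. -/
def subPlusVerts [Nonempty V] (M : LNet V L) (C : Set V) : Set V :=
  {v | M.toNet.Reaches (M.lcaOf C) v ∧ ∃ c ∈ C, M.toNet.Reaches v c}

/-- The tree `M_C⁺` spanned by the leaves in `C`; the canonical injection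
`ξ_C⁺ : V(M_C⁺) → V(M)` is the set-inclusion `subPlusVerts M C ⊆ V`, so that
the map `ξ̄_C⁺ = p_M ∘ ξ_C⁺` is realized by `eqClass M` restricted to
`subPlusVerts M C`. -/
noncomputable def subPlus [Nonempty V] (M : LNet V L) (C : Set V) : Net V where
  verts := M.subPlusVerts C
  arcs := fun u w => if u ∈ M.subPlusVerts C ∧ w ∈ M.subPlusVerts C then M.arcs u w else 0
  root := M.lcaOf C

/-- The phylogenetic tree `M_C` induced by the `X`-set `C`: suppress all
vertices of indegree one and outdegree one in `M_C⁺`. -/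
noncomputable def mC [Nonempty V] (M : LNet V L) (C : Set V) : Net V := (M.subPlus C).suppr

/-- The set `V(M)^C`: the vertex `r_C` together with all vertices `v` such
that no vertex below `v` is `∼`-equivalent to `r_C`. -/
def vmc [Nonempty V] (M : LNet V L) (C : Set V) : Set V :=
  insert (M.lcaOf C) {v ∈ M.verts | ∀ u, M.toNet.Reaches v u → ¬ M.Sim u (M.lcaOf C)}

/-- Vertices of `M` having a descendant leaf labelled by an element of `Y`. -/
def keepSet (M : LNet V L) (Y : Set L) : Set V :=
  {v ∈ M.verts | ∃ w, M.toNet.Reaches v w ∧ ∃ y ∈ Y, w ∈ M.lab y}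

/-- The MUL-tree `M_Y` obtained from `M` by the leaf-removing operation:
remove all leaves labelled outside `Y` (together with everything having no
leaf labelled in `Y` below it) and suppress all resulting vertices of
indegree one and outdegree one. -/
noncomputable def restrictMul (M : LNet V L) (Y : Set L) : LNet V L where
  toNet := Net.suppr
    { verts := M.keepSet Y
      arcs := fun u w => if u ∈ M.keepSet Y ∧ w ∈ M.keepSet Y then M.arcs u w else 0
      root := M.root }
  lab := fun y => if y ∈ Y then M.lab y else ∅

end LNet

namespace Net

variable {V : Type u}

/-- The vertex set of the un-fold `U(N)` of `N`: the set `π⁻(N)` of directed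
paths of `N` starting at the root and ending in a tree vertex.  (The
bijection `Ψ_N : π⁻(N) → V(U(N))` is thereby realized as the identity.) -/
def unfoldVerts (N : Net V) : Set (List (Arc V)) :=
  {p | N.WalkFrom N.root p ∧ N.IsTreeVert (endOf N.root p)}

/-- The un-fold `U(N)` of `N`, a MUL-tree on `X`: vertices are the directed
paths from the root ending in tree vertices, arcs correspond to extending
such a path by a single arc followed by a (possibly empty) run of hybrid
vertices, and the leaves labelled `x ∈ X` are the paths ending in `x`. -/
noncomputable def unfoldNet (N : Net V) (X : Set V) : LNet (List (Arc V)) V where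
  verts := unfoldVerts N
  arcs := fun p q =>
    if p ∈ unfoldVerts N ∧ q ∈ unfoldVerts N ∧
        ∃ r, r ≠ [] ∧ q = p ++ r ∧ ∀ a ∈ r.dropLast, N.IsHybrid (a : Arc V).2.1
    then 1 else 0
  root := []
  lab := fun x => if x ∈ X then {p ∈ unfoldVerts N | endOf N.root p = x} else ∅

end Net

/-- `N` is a stable phylogenetic network on `X`: `N` is a phylogenetic
network isomorphic to the fold-up of its un-fold, via an isomorphism fixing
`X` pointwise (i.e. sending each leaf `x` to the leaf of `F(U(N))`
corresponding to `x`). -/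
def IsStable {V : Type u} (N : Net V) (X : Set V) : Prop :=
  Net.IsPhyloNetwork N X ∧
    ∃ g, Net.NetIsoVia N (Net.unfoldNet N X).foldUp g ∧
      ∀ x ∈ X, g x = Sum.inl ((Net.unfoldNet N X).labClass x)

/-- `T` is endorsed by the MUL-tree `M` via the `X`-set `C`, the isomorphism
`T ≅ M_C` being realized by `σ` (which sends each `x ∈ X` to the unique leaf
of `C` labelled `x`). -/
def EndorsedVia {V : Type u} {W : Type w} [Nonempty W] (T : Net V) (X : Set V)
    (M : LNet W V) (C : Set W) (σ : V → W) : Prop :=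
  M.IsXSet X C ∧ Net.NetIsoVia T (M.mC C) σ ∧ ∀ x ∈ X, σ x ∈ C ∧ σ x ∈ M.lab x

/-- `T` is endorsed by the MUL-tree `M` via the `X`-set `C`. -/
def Endorsed {V : Type u} {W : Type w} [Nonempty W] (T : Net V) (X : Set V)
    (M : LNet W V) (C : Set W) : Prop :=
  ∃ σ, EndorsedVia T X M C σ

/-- `N'` is a subgraph of `N` with leaf set `X` which is (an isomorphic copy,
via the identity on `X`, of) a subdivision of `T`: suppressing all vertices
of indegree one and outdegree one in `N'` yields a tree isomorphic to `T`
via an isomorphism `g` fixing `X` pointwise. -/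
def IsDisplayWitness {V : Type u} (N : Net V) (X : Set V) (T : Net V)
    (N' : Net V) (g : V → V) : Prop :=
  N'.verts ⊆ N.verts ∧ (∀ u v, N'.arcs u v ≤ N.arcs u v) ∧
    N'.root ∈ N'.verts ∧ (∀ v ∈ N'.verts, N'.Reaches N'.root v) ∧
    (∀ v, N'.IsLeaf v ↔ v ∈ X) ∧
    Net.NetIsoVia T N'.suppr g ∧ ∀ x ∈ X, g x = x

/-- The phylogenetic tree `T` is displayed by `N`. -/
def Displays {V : Type u} (N : Net V) (X : Set V) (T : Net V) : Prop :=
  ∃ N' g, IsDisplayWitness N X T N' g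

/-- The phylogenetic tree `T` is strongly displayed by `N`: it is displayed
via a subdivision whose root is the root of `N`. -/
def StronglyDisplays {V : Type u} (N : Net V) (X : Set V) (T : Net V) : Prop :=
  ∃ N' g, IsDisplayWitness N X T N' g ∧ N'.root = N.root

/-- `G` is a rooted tree. -/
structure IsRootedTree {V : Type u} (G : Net V) : Prop where
  pseudo : G.IsPseudoDAG
  rootInDeg : G.inDeg G.root = 0
  inDegOne : ∀ v ∈ G.verts, v ≠ G.root → G.inDeg v = 1

/-- `T'` is a subdivision of `T` (with the identity on `X`): `T'` is a rooted
tree which, after suppressing all vertices of indegree one and outdegree one,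
is isomorphic to `T` via an isomorphism fixing `X` pointwise. -/
def IsSubdivisionOf {V : Type u} (T' T : Net V) (X : Set V) : Prop :=
  IsRootedTree T' ∧ ∃ g, Net.NetIsoVia T T'.suppr g ∧ ∀ x ∈ X, g x = x

/-- `T` is a base tree for `N`: `N` can be obtained from `T` by subdividing
some arcs of `T`, adding arcs between the subdivision vertices without
creating parallel arcs or directed cycles, and suppressing all subdivision
vertices still of indegree one and outdegree one. -/
def IsBaseTreeFor {V : Type u} (T : Net V) (X : Set V) (N : Net V) : Prop :=
  ∃ T' G : Net V,
    IsSubdivisionOf T' T X ∧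
    G.verts = T'.verts ∧ G.root = T'.root ∧
    (∀ u v, T'.arcs u v ≤ G.arcs u v) ∧
    (∀ u v, T'.arcs u v ≠ G.arcs u v → T'.Suppressible u ∧ T'.Suppressible v) ∧
    G.NoParallel ∧ G.Acyclic ∧
    ∃ h, Net.NetIsoVia G.suppr N h ∧ ∀ x ∈ X, h x = x

end Phylo
namespace Phylo

/- ------------------------------------------------------------------
Auxiliary lemmas for Statement 14.
------------------------------------------------------------------- -/

section Aux

variable {V : Type u} {L : Type v}

lemma Net.endOf_cons_eq (u : V) (a : Arc V) (t : List (Arc V)) :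
    Net.endOf u (a :: t) = Net.endOf a.2.1 t := by
  cases t with
  | nil => rfl
  | cons b t' => simp only [Net.endOf, List.getLastD_cons]

lemma Net.walk_rtg (N : Net V) :
    ∀ (l : List (Arc V)) (u : V), N.WalkFrom u l →
      Relation.ReflTransGen N.ArcRel u (Net.endOf u l) := by
  intro l
  induction l with
  | nil => intro u _; exact Relation.ReflTransGen.refl
  | cons a t ih =>
    intro u hw
    obtain ⟨hu, hok, hch, hhd⟩ := hw
    have ha1 : a.1 = u := hhd a rfl
    have hoka : N.okArc a := hok a List.mem_cons_self
    have step : N.ArcRel u a.2.1 := by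
      rw [← ha1]
      exact lt_of_le_of_lt (Nat.zero_le _) hoka.2.2
    have hwt : N.WalkFrom a.2.1 t := by
      refine ⟨hoka.2.1, fun b hb => hok b (List.mem_cons_of_mem _ hb), hch.tail, ?_⟩
      intro b hb
      cases t with
      | nil => simp at hb
      | cons c t' =>
        simp only [List.head?_cons, Option.mem_def, Option.some.injEq] at hb
        subst hb
        exact (List.isChain_cons_cons.mp hch).1.symm
    rw [Net.endOf_cons_eq]
    exact Relation.ReflTransGen.head step (ih _ hwt)

lemma Net.rtg_mem (N : Net V)
    (harc : ∀ u v, N.arcs u v ≠ 0 → u ∈ N.verts ∧ v ∈ N.verts)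
    {u w : V} (hu : u ∈ N.verts) (h : Relation.ReflTransGen N.ArcRel u w) :
    w ∈ N.verts := by
  induction h with
  | refl => exact hu
  | @tail b c _ hbc _ =>
    have hbc' : 0 < N.arcs b c := hbc
    exact (harc _ _ hbc'.ne').2

lemma Net.rtg_reaches (N : Net V)
    (harc : ∀ u v, N.arcs u v ≠ 0 → u ∈ N.verts ∧ v ∈ N.verts)
    {u w : V} (hu : u ∈ N.verts) (h : Relation.ReflTransGen N.ArcRel u w) :
    N.Reaches u w := by
  induction h with
  | refl => exact ⟨[], ⟨hu, by simp, List.isChain_nil, by simp⟩, rfl⟩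
  | @tail b c hub hbc ih =>
    obtain ⟨l, hwl, hend⟩ := ih
    obtain ⟨hu', hok, hch, hhd⟩ := hwl
    have hbc' : 0 < N.arcs b c := hbc
    have hbv : b ∈ N.verts := (harc _ _ hbc'.ne').1
    have hcv : c ∈ N.verts := (harc _ _ hbc'.ne').2
    refine ⟨l ++ [(b, c, 0)], ⟨hu, ?_, ?_, ?_⟩, ?_⟩
    · intro a ha
      rcases List.mem_append.mp ha with h1 | h1
      · exact hok a h1
      · simp only [List.mem_singleton] at h1
        subst h1
        exact ⟨hbv, hcv, hbc'⟩
    · show List.IsChain _ _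
      rw [List.isChain_append]
      refine ⟨hch, List.isChain_singleton _, ?_⟩
      intro x hx y hy
      simp only [List.head?_cons, Option.mem_def, Option.some.injEq] at hy
      subst hy
      have hx' : l.getLast? = some x := hx
      have : Net.endOf u l = x.2.1 := by
        rw [Net.endOf, List.getLastD_eq_getLast?, hx']
        rfl
      rw [← hend, this]
    · intro a ha
      cases l with
      | nil =>
        simp only [List.nil_append, List.head?_cons, Option.mem_def,
          Option.some.injEq] at ha
        subst ha
        exact hend.symm
      | cons a' t =>
        simp only [List.cons_append, List.head?_cons, Option.mem_def,
          Option.some.injEq] at ha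
        subst ha
        exact hhd _ rfl
    · show (((l ++ [(b, c, 0)]).getLastD (u, u, 0))).2.1 = c
      rw [List.getLastD_concat]

lemma Net.reaches_iff_rtg (N : Net V)
    (harc : ∀ u v, N.arcs u v ≠ 0 → u ∈ N.verts ∧ v ∈ N.verts)
    {u w : V} (hu : u ∈ N.verts) :
    N.Reaches u w ↔ Relation.ReflTransGen N.ArcRel u w := by
  constructor
  · rintro ⟨l, hwl, rfl⟩
    exact N.walk_rtg l u hwl
  · exact N.rtg_reaches harc hu

namespace LNet

variable {M : LNet V L} {X : Set L}

lemma belowSet_iff (hM : M.IsMulTree X) {a w : V} (ha : a ∈ M.verts) :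
    w ∈ M.belowSet a ↔ Relation.ReflTransGen M.toNet.ArcRel a w :=
  M.toNet.reaches_iff_rtg hM.pseudo.arcMem ha

lemma belowSet_subset_verts (hM : M.IsMulTree X) {a : V} (ha : a ∈ M.verts) :
    M.belowSet a ⊆ M.verts := fun w hw =>
  M.toNet.rtg_mem hM.pseudo.arcMem ha ((belowSet_iff hM ha).mp hw)

lemma self_mem_belowSet (hM : M.IsMulTree X) {a : V} (ha : a ∈ M.verts) :
    a ∈ M.belowSet a :=
  (belowSet_iff hM ha).mpr Relation.ReflTransGen.refl

lemma belowSet_trans (hM : M.IsMulTree X) {a b : V} (ha : a ∈ M.verts)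
    (hb : b ∈ M.belowSet a) : M.belowSet b ⊆ M.belowSet a := by
  intro w hw
  have hbv : b ∈ M.verts := belowSet_subset_verts hM ha hb
  exact (belowSet_iff hM ha).mpr
    (((belowSet_iff hM ha).mp hb).trans ((belowSet_iff hM hbv).mp hw))

lemma subAt_arcs {a p q : V} (hp : p ∈ M.belowSet a) (hq : q ∈ M.belowSet a) :
    (M.subAt a).arcs p q = M.arcs p q := if_pos ⟨hp, hq⟩

lemma parent_unique (hM : M.IsMulTree X) {p q w : V}
    (hp : 0 < M.arcs p w) (hq : 0 < M.arcs q w) : p = q := by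
  by_contra hne
  have hfin : (Function.support fun x => M.arcs x w).Finite :=
    hM.pseudo.finite.subset fun x hx => (hM.pseudo.arcMem x w hx).1
  have hle : M.arcs p w + M.arcs q w ≤ M.toNet.inDeg w := by
    have hpair : ∑ x ∈ ({p, q} : Finset V), M.arcs x w = M.arcs p w + M.arcs q w :=
      Finset.sum_pair hne
    rw [Net.inDeg, finsum_eq_sum _ hfin, ← hpair]
    apply Finset.sum_le_sum_of_subset
    intro x hx
    simp only [Finset.mem_insert, Finset.mem_singleton] at hx
    rcases hx with rfl | rfl <;>
      simp only [Set.Finite.mem_toFinset, Function.mem_support] <;> omega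
  have hwv : w ∈ M.verts := (hM.pseudo.arcMem p w hp.ne').2
  by_cases hroot : w = M.root
  · subst hroot
    have h0 := hM.rootInDeg
    omega
  · have := hM.inDegOne w hwv hroot
    omega

lemma rtg_comparable {r : V → V → Prop} (hup : ∀ p q w, r p w → r q w → p = q)
    {a b w : V} (ha : Relation.ReflTransGen r a w) :
    Relation.ReflTransGen r b w →
      Relation.ReflTransGen r a b ∨ Relation.ReflTransGen r b a := by
  induction ha with
  | refl => exact fun hb => Or.inr hb
  | @tail c w' hac hcw ih =>
    intro hb
    rcases hb.cases_tail with rfl | ⟨d, hbd, hdw⟩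
    · exact Or.inl (hac.tail hcw)
    · exact ih (by rwa [hup d c w' hdw hcw] at hbd)

lemma rtg_antisymm (hM : M.IsMulTree X) {p q : V}
    (h1 : Relation.ReflTransGen M.toNet.ArcRel p q)
    (h2 : Relation.ReflTransGen M.toNet.ArcRel q p) : p = q := by
  by_contra hne
  rcases h1.cases_head with rfl | ⟨c, hpc, hcq⟩
  · exact hne rfl
  · exact hM.pseudo.acyclic p (Relation.TransGen.head' hpc (hcq.trans h2))

lemma reach_eq_of_ncard (hM : M.IsMulTree X) {p q : V} (hp : p ∈ M.verts)
    (hpq : q ∈ M.belowSet p)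
    (hcard : (M.belowSet p).ncard = (M.belowSet q).ncard) : p = q := by
  have hq : q ∈ M.verts := belowSet_subset_verts hM hp hpq
  have hsub : M.belowSet q ⊆ M.belowSet p := belowSet_trans hM hp hpq
  have heq : M.belowSet q = M.belowSet p :=
    Set.eq_of_subset_of_ncard_le hsub (le_of_eq hcard)
      (hM.pseudo.finite.subset (belowSet_subset_verts hM hp))
  have hmem : p ∈ M.belowSet q := heq ▸ self_mem_belowSet hM hp
  exact rtg_antisymm hM ((belowSet_iff hM hp).mp hpq) ((belowSet_iff hM hq).mp hmem)

lemma sim_belowSet_ncard {a b : V} (h : M.Sim a b) :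
    (M.belowSet a).ncard = (M.belowSet b).ncard := by
  rcases h with rfl | ⟨η, hbij, -, -, -⟩
  · rfl
  · have h2 : η '' M.belowSet a = M.belowSet b := hbij.image_eq
    have h3 : Set.InjOn η (M.belowSet a) := hbij.injOn
    rw [← h2, Set.ncard_image_of_injOn h3]

lemma mulIso_symm {M₁ M₂ : LNet V L} {η : V → V}
    (hroot : M₁.root ∈ M₁.verts)
    (h : LNet.MulIsoVia M₁ M₂ η) : LNet.MulIso M₂ M₁ := by
  obtain ⟨hbij, harcs, hrt, hlab⟩ := h
  have hne : Nonempty V := ⟨M₁.root⟩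
  set ζ := Function.invFunOn η M₁.verts with hζ
  have hinv : Set.InvOn ζ η M₁.verts M₂.verts := hbij.invOn_invFunOn
  have hbij' : Set.BijOn ζ M₂.verts M₁.verts := hbij.symm ⟨hinv.2, hinv.1⟩
  refine ⟨ζ, hbij', ?_, ?_, ?_⟩
  · intro p hp q hq
    have hp' : ζ p ∈ M₁.verts := hbij'.mapsTo hp
    have hq' : ζ q ∈ M₁.verts := hbij'.mapsTo hq
    have e1 : η (ζ p) = p := hinv.2 hp
    have e2 : η (ζ q) = q := hinv.2 hq
    calc M₁.arcs (ζ p) (ζ q) = M₂.arcs (η (ζ p)) (η (ζ q)) :=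
          (harcs _ hp' _ hq').symm
      _ = M₂.arcs p q := by rw [e1, e2]
  · rw [← hrt]
    exact hinv.1 hroot
  · intro x
    rw [← hlab x]
    exact hinv.1.image_image' Set.inter_subset_right

lemma iso_transport (hM : M.IsMulTree X) {a b : V} (ha : a ∈ M.verts)
    (hb : b ∈ M.verts) {η : V → V}
    (hη : LNet.MulIsoVia (M.subAt a) (M.subAt b) η)
    {w : V} (hw : w ∈ M.belowSet a) :
    η w ∈ M.belowSet b ∧ LNet.MulIsoVia (M.subAt w) (M.subAt (η w)) η := by
  obtain ⟨hbij, harcs, hrt, hlab⟩ := hη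
  have hbij' : Set.BijOn η (M.belowSet a) (M.belowSet b) := hbij
  have harcs' : ∀ p ∈ M.belowSet a, ∀ q ∈ M.belowSet a,
      (M.subAt b).arcs (η p) (η q) = (M.subAt a).arcs p q := harcs
  have hlab2 : ∀ x : L, η '' (M.lab x ∩ M.belowSet a) = M.lab x ∩ M.belowSet b := by
    intro x
    have h0 : η '' (M.lab x ∩ M.belowSet a ∩ M.belowSet a)
        = M.lab x ∩ M.belowSet b ∩ M.belowSet b := hlab x
    simpa [Set.inter_assoc] using h0
  have harcM : ∀ p ∈ M.belowSet a, ∀ q ∈ M.belowSet a,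
      M.arcs (η p) (η q) = M.arcs p q := by
    intro p hp q hq
    rw [← subAt_arcs (hbij'.mapsTo hp) (hbij'.mapsTo hq), harcs' p hp q hq,
      subAt_arcs hp hq]
  have hstep : ∀ p ∈ M.belowSet a, ∀ q, M.toNet.ArcRel p q →
      q ∈ M.belowSet a ∧ M.toNet.ArcRel (η p) (η q) := by
    intro p hp q hpq
    have hq : q ∈ M.belowSet a :=
      (belowSet_iff hM ha).mpr (((belowSet_iff hM ha).mp hp).tail hpq)
    refine ⟨hq, ?_⟩
    have hpq' : 0 < M.arcs p q := hpq
    show 0 < M.arcs (η p) (η q)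
    rw [harcM p hp q hq]
    exact hpq'
  have hstep' : ∀ p ∈ M.belowSet a, ∀ q ∈ M.belowSet a,
      M.toNet.ArcRel (η p) (η q) → M.toNet.ArcRel p q := by
    intro p hp q hq hpq
    have hpq' : 0 < M.arcs (η p) (η q) := hpq
    show 0 < M.arcs p q
    rw [← harcM p hp q hq]
    exact hpq'
  have claim1 : ∀ p, Relation.ReflTransGen M.toNet.ArcRel w p →
      p ∈ M.belowSet a ∧ Relation.ReflTransGen M.toNet.ArcRel (η w) (η p) := by
    intro p hp
    induction hp with
    | refl => exact ⟨hw, Relation.ReflTransGen.refl⟩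
    | @tail c p hwc hcp ih =>
      obtain ⟨hc, hrc⟩ := ih
      obtain ⟨hpa, hstep2⟩ := hstep c hc p hcp
      exact ⟨hpa, hrc.tail hstep2⟩
  have claim2 : ∀ p', Relation.ReflTransGen M.toNet.ArcRel (η w) p' →
      ∃ p, p ∈ M.belowSet a ∧ Relation.ReflTransGen M.toNet.ArcRel w p ∧ η p = p' := by
    intro p' hp'
    induction hp' with
    | refl => exact ⟨w, hw, Relation.ReflTransGen.refl, rfl⟩
    | @tail c' p' hwc' hcp ih =>
      obtain ⟨c, hca, hwc2, rfl⟩ := ih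
      have hc'b : η c ∈ M.belowSet b := hbij'.mapsTo hca
      have hpb : p' ∈ M.belowSet b :=
        (belowSet_iff hM hb).mpr (((belowSet_iff hM hb).mp hc'b).tail hcp)
      obtain ⟨p, hpa, hep⟩ := hbij'.surjOn hpb
      have harc2 : M.toNet.ArcRel c p := by
        apply hstep' c hca p hpa
        rw [hep]
        exact hcp
      exact ⟨p, hpa, hwc2.tail harc2, hep⟩
  have hwv : w ∈ M.verts := belowSet_subset_verts hM ha hw
  have hew : η w ∈ M.belowSet b := hbij'.mapsTo hw
  have hewv : η w ∈ M.verts := belowSet_subset_verts hM hb hew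
  have hmt : ∀ p ∈ M.belowSet w, η p ∈ M.belowSet (η w) := by
    intro p hp
    exact (belowSet_iff hM hewv).mpr (claim1 p ((belowSet_iff hM hwv).mp hp)).2
  have hsurj : ∀ p' ∈ M.belowSet (η w), ∃ p ∈ M.belowSet w, η p = p' := by
    intro p' hp'
    obtain ⟨p, hpa, hwp, hep⟩ := claim2 p' ((belowSet_iff hM hewv).mp hp')
    exact ⟨p, (belowSet_iff hM hwv).mpr hwp, hep⟩
  refine ⟨hew, ⟨hmt, hbij'.injOn.mono (belowSet_trans hM ha hw), ?_⟩, ?_, rfl, ?_⟩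
  · intro p' hp'
    obtain ⟨p, hp, hep⟩ := hsurj p' hp'
    exact ⟨p, hp, hep⟩
  · intro p hp q hq
    have hpa : p ∈ M.belowSet a := belowSet_trans hM ha hw hp
    have hqa : q ∈ M.belowSet a := belowSet_trans hM ha hw hq
    rw [subAt_arcs (hmt p hp) (hmt q hq), subAt_arcs hp hq]
    exact harcM p hpa q hqa
  · intro x
    have goal' : η '' (M.lab x ∩ M.belowSet w) = M.lab x ∩ M.belowSet (η w) := by
      apply Set.Subset.antisymm
      · rintro _ ⟨p, ⟨hpl, hpw⟩, rfl⟩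
        refine ⟨?_, hmt p hpw⟩
        have hmem : η p ∈ M.lab x ∩ M.belowSet b := by
          rw [← hlab2 x]
          exact ⟨p, ⟨hpl, belowSet_trans hM ha hw hpw⟩, rfl⟩
        exact hmem.1
      · rintro p' ⟨hpl', hpw'⟩
        obtain ⟨p, hpa2, hwp, rfl⟩ := claim2 p' ((belowSet_iff hM hewv).mp hpw')
        refine ⟨p, ⟨?_, (belowSet_iff hM hwv).mpr hwp⟩, rfl⟩
        have hpb' : η p ∈ M.lab x ∩ M.belowSet b := ⟨hpl', hbij'.mapsTo hpa2⟩
        rw [← hlab2 x] at hpb'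
        obtain ⟨p₂, hp₂, he₂⟩ := hpb'
        have hpp : p₂ = p := hbij'.injOn hp₂.2 hpa2 he₂
        rw [← hpp]
        exact hp₂.1
    show η '' (M.lab x ∩ M.belowSet w ∩ M.belowSet w)
        = M.lab x ∩ M.belowSet (η w) ∩ M.belowSet (η w)
    rw [Set.inter_assoc, Set.inter_self, Set.inter_assoc, Set.inter_self]
    exact goal'

end LNet

end Aux

/-- Let `M` be a MUL-tree on `X` and let `u, v` be
vertices of `M` such that `u` is an ancestor of `v`.  Then
`|p_M(u)| ≤ |p_M(v)|`: the `∼`-equivalence class of `u` has at most as many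
elements as the `∼`-equivalence class of `v`. -/
theorem class_card_mono {V : Type u} {L : Type v} (X : Set L) (M : LNet V L)
    (hX : 3 ≤ X.ncard) (hM : M.IsMulTree X)
    (u v : V) (hu : u ∈ M.verts) (hv : v ∈ M.verts)
    (h : M.toNet.Reaches u v) :
    (M.eqClass u).ncard ≤ (M.eqClass v).ncard := by
  classical
  have hup : ∀ p q w' : V, M.toNet.ArcRel p w' → M.toNet.ArcRel q w' → p = q :=
    fun p q w' h1 h2 => LNet.parent_unique hM h1 h2
  have key : ∀ u' ∈ M.eqClass u, ∃ v', v' ∈ M.eqClass v ∧ v' ∈ M.belowSet u' := by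
    intro u' hu'
    obtain ⟨hu'v, hsim⟩ := hu'
    rcases hsim with rfl | ⟨η', hη'⟩
    · exact ⟨v, ⟨hv, Or.inl rfl⟩, h⟩
    · obtain ⟨η, hη⟩ := LNet.mulIso_symm (LNet.self_mem_belowSet hM hu'v) hη'
      obtain ⟨hmem, hiso⟩ := LNet.iso_transport hM hu hu'v hη
        (show v ∈ M.belowSet u from h)
      have hv'v : η v ∈ M.verts := LNet.belowSet_subset_verts hM hu'v hmem
      have hsim' : LNet.MulIso (M.subAt (η v)) (M.subAt v) :=
        LNet.mulIso_symm (LNet.self_mem_belowSet hM hv) hiso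
      exact ⟨η v, ⟨hv'v, Or.inr hsim'⟩, hmem⟩
  set F : V → V := fun u' =>
    if hex : ∃ v', v' ∈ M.eqClass v ∧ v' ∈ M.belowSet u' then hex.choose else v
    with hF
  have hFspec : ∀ u' ∈ M.eqClass u, F u' ∈ M.eqClass v ∧ F u' ∈ M.belowSet u' := by
    intro u' hu'
    have hex := key u' hu'
    simp only [hF, dif_pos hex]
    exact hex.choose_spec
  have hfin : (M.eqClass v).Finite := hM.pseudo.finite.subset fun p hp => hp.1
  apply Set.ncard_le_ncard_of_injOn F (fun u' hu' => (hFspec u' hu').1) ?_ hfin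
  intro u₁ h₁ u₂ h₂ heq
  have m₁ : u₁ ∈ M.verts := h₁.1
  have m₂ : u₂ ∈ M.verts := h₂.1
  have r₁ : Relation.ReflTransGen M.toNet.ArcRel u₁ (F u₁) :=
    (LNet.belowSet_iff hM m₁).mp (hFspec u₁ h₁).2
  have r₂ : Relation.ReflTransGen M.toNet.ArcRel u₂ (F u₁) := by
    rw [heq]
    exact (LNet.belowSet_iff hM m₂).mp (hFspec u₂ h₂).2
  have hcard : (M.belowSet u₁).ncard = (M.belowSet u₂).ncard := by
    rw [LNet.sim_belowSet_ncard h₁.2, LNet.sim_belowSet_ncard h₂.2]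
  rcases LNet.rtg_comparable hup r₁ r₂ with h12 | h21
  · exact LNet.reach_eq_of_ncard hM m₁ ((LNet.belowSet_iff hM m₁).mpr h12) hcard
  · exact (LNet.reach_eq_of_ncard hM m₂ ((LNet.belowSet_iff hM m₂).mpr h21)
      hcard.symm).symm

end Phylo
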